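/- arXiv:2307.12414 — 3 statements merged into one kernel-verified Lean document; each statement's English description precedes it below -/
import Mathlib

section
/- Let P be a 2×2 real symmetric positive definite matrix with eigenvalues λ₁ ≥ λ₂ > 0. Then for every unit vector κ ∈ S_ℂ in ℂ^N, the Frobenius norm of the inverse satisfies ‖(κ ⋄_P κ)⁻¹‖_F ≤ √(λ₁² + λ₂²)/(λ₁λ₂). -/
open scoped BigOperators Matrix ComplexOrder
open MeasureTheory Filter Matrix

noncomputable section

/-- Complex `N`-vector with the Euclidean norm. -/
abbrev CVec (N : ℕ) := EuclideanSpace ℂ (Fin N)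

/-- `vec(z) = (Re z, Im z)ᵀ ∈ ℝ²`. -/
def vecC (z : ℂ) : Fin 2 → ℝ := ![z.re, z.im]

/-- `M(z)` : real `2×2` matrix representation of `z ∈ ℂ`. -/
def MC (z : ℂ) : Matrix (Fin 2) (Fin 2) ℝ := !![z.re, -z.im; z.im, z.re]

/-- `z ⋄_A w = Σ_ν M(z_ν)ᵀ A M(w_ν)`. -/
def diaA {N : ℕ} (A : Matrix (Fin 2) (Fin 2) ℝ) (z w : CVec N) : Matrix (Fin 2) (Fin 2) ℝ :=
  ∑ ν, (MC (z ν))ᵀ * A * MC (w ν)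

/-- `z •_A w = Σ_ν M(z_ν)ᵀ A vec(w_ν)`. -/
def bulA {N : ℕ} (A : Matrix (Fin 2) (Fin 2) ℝ) (z w : CVec N) : Fin 2 → ℝ :=
  ∑ ν, ((MC (z ν))ᵀ * A) *ᵥ vecC (w ν)

/-- `⟨z,w⟩_A = Σ_ν vec(z_ν)ᵀ A vec(w_ν)`. -/
def iprA {N : ℕ} (A : Matrix (Fin 2) (Fin 2) ℝ) (z w : CVec N) : ℝ :=
  ∑ ν, vecC (z ν) ⬝ᵥ (A *ᵥ vecC (w ν))

/-- Mahalanobis distance `d_A(z,w) = ‖z-w‖_A`. -/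
def dMah {N : ℕ} (A : Matrix (Fin 2) (Fin 2) ℝ) (z w : CVec N) : ℝ :=
  Real.sqrt (iprA A (z - w) (z - w))

/-- `φ̂(κ,P,Y)`, the complex number with `vec(φ̂) = (κ ⋄_P κ)⁻¹ (κ •_P Y)`. -/
def phiHat {N : ℕ} (κ : CVec N) (P : Matrix (Fin 2) (Fin 2) ℝ) (Y : CVec N) : ℂ :=
  ((((diaA P κ κ)⁻¹ *ᵥ bulA P κ Y) 0 : ℝ) : ℂ) +
    ((((diaA P κ κ)⁻¹ *ᵥ bulA P κ Y) 1 : ℝ) : ℂ) * Complex.I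

/-- the loss `ρ(Y,[κ]) = d_P(Y, φ̂(κ,P,Y)κ)²`. -/
def rhoD {N : ℕ} (P : Matrix (Fin 2) (Fin 2) ℝ) (Y κ : CVec N) : ℝ :=
  dMah P Y (phiHat κ P Y • κ) ^ 2

/-- projective distance `d([κ],[κ']) = min_λ ‖κ - e^{iλ} κ'‖`. -/
def pdist {N : ℕ} (κ κ' : CVec N) : ℝ :=
  ⨅ t : ℝ, ‖κ - Complex.exp (t * Complex.I) • κ'‖

/-- Euclidean norm on `ℝ²`. -/
def nrm2 (v : Fin 2 → ℝ) : ℝ := Real.sqrt (v 0 ^ 2 + v 1 ^ 2)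

/-- Frobenius norm of a real `2×2` matrix. -/
def frob (A : Matrix (Fin 2) (Fin 2) ℝ) : ℝ := Real.sqrt (∑ i, ∑ j, A i j ^ 2)


lemma psd_det' (α β γ : ℝ) (hE : ∀ u1 u2 : ℝ, 0 ≤ α*u1^2 + 2*β*u1*u2 + γ*u2^2) :
    β^2 ≤ α*γ := by
  have h1 := hE 1 0
  have h2 := hE 0 1
  have h3 := hE β (-α)
  have h4 := hE γ (-β)
  have h5 := hE 1 1
  have h6 := hE 1 (-1)
  by_contra hc
  push_neg at hc
  have hα : α = 0 := by nlinarith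
  have hγ : γ = 0 := by nlinarith
  have hβ : β = 0 := by nlinarith
  nlinarith

lemma final_arith' (l1 l2 t S : ℝ) (hl2 : 0 < l2) (hl12 : l2 ≤ l1)
    (hS : S = (l1+l2)^2 - 2*t) (ht : l1*l2 ≤ t) :
    Real.sqrt (S / t^2) ≤ Real.sqrt (l1^2+l2^2) / (l1*l2) := by
  have hl1 : 0 < l1 := lt_of_lt_of_le hl2 hl12
  have hll : 0 < l1 * l2 := mul_pos hl1 hl2
  have htpos : 0 < t := lt_of_lt_of_le hll ht
  have key : S / t^2 ≤ (l1^2+l2^2) / (l1*l2)^2 := by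
    rw [div_le_div_iff₀ (pow_pos htpos 2) (by positivity)]
    nlinarith [mul_nonneg (sub_nonneg.mpr ht)
      (by nlinarith : (0:ℝ) ≤ (t + l1*l2)*(l1^2+l2^2) + 2*(l1*l2)^2)]
  calc Real.sqrt (S / t^2) ≤ Real.sqrt ((l1^2+l2^2) / (l1*l2)^2) := Real.sqrt_le_sqrt key
    _ = Real.sqrt (l1^2+l2^2) / (l1*l2) := by
        rw [Real.sqrt_div (by positivity), Real.sqrt_sq hll.le]


set_option maxHeartbeats 1000000 in
/-- Frobenius norm bound `‖(κ ⋄_P κ)⁻¹‖_F ≤ √(λ₁² + λ₂²)/(λ₁λ₂)` for unit `κ`. -/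
theorem dia_inv_frobenius_bound {N : ℕ}
    (P R : Matrix (Fin 2) (Fin 2) ℝ) (l1 l2 : ℝ)
    (hR : R * Rᵀ = 1) (hPspec : P = R * Matrix.diagonal ![l1, l2] * Rᵀ)
    (hl2 : 0 < l2) (hl12 : l2 ≤ l1)
    (κ : CVec N) (hκ : ‖κ‖ = 1) :
    frob ((diaA P κ κ)⁻¹) ≤ Real.sqrt (l1 ^ 2 + l2 ^ 2) / (l1 * l2) := by
  set x : Fin N → ℝ := fun ν => (κ ν).re with hx
  set y : Fin N → ℝ := fun ν => (κ ν).im with hy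
  set D := diaA P κ κ with hDdef
  -- entries of D
  have hD00 : D 0 0 = ∑ ν, (P 0 0*(x ν)^2 + (P 0 1+P 1 0)*(x ν)*(y ν) + P 1 1*(y ν)^2) := by
    simp only [hDdef, diaA, Matrix.sum_apply]
    refine Finset.sum_congr rfl fun ν _ => ?_
    simp [MC, Matrix.mul_apply, Fin.sum_univ_succ]; ring
  have hD01 : D 0 1 = ∑ ν, (P 0 1*(x ν)^2 - P 1 0*(y ν)^2 + (P 1 1-P 0 0)*(x ν)*(y ν)) := by
    simp only [hDdef, diaA, Matrix.sum_apply]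
    refine Finset.sum_congr rfl fun ν _ => ?_
    simp [MC, Matrix.mul_apply, Fin.sum_univ_succ]; ring
  have hD10 : D 1 0 = ∑ ν, (P 1 0*(x ν)^2 - P 0 1*(y ν)^2 + (P 1 1-P 0 0)*(x ν)*(y ν)) := by
    simp only [hDdef, diaA, Matrix.sum_apply]
    refine Finset.sum_congr rfl fun ν _ => ?_
    simp [MC, Matrix.mul_apply, Fin.sum_univ_succ]; ring
  have hD11 : D 1 1 = ∑ ν, (P 0 0*(y ν)^2 - (P 0 1+P 1 0)*(x ν)*(y ν) + P 1 1*(x ν)^2) := by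
    simp only [hDdef, diaA, Matrix.sum_apply]
    refine Finset.sum_congr rfl fun ν _ => ?_
    simp [MC, Matrix.mul_apply, Fin.sum_univ_succ]; ring
  -- unit norm
  have hsum : ∑ ν, ((x ν)^2 + (y ν)^2) = 1 := by
    have h1 : ‖κ‖ ^ 2 = ∑ ν, ‖κ ν‖^2 := by
      rw [EuclideanSpace.norm_eq, Real.sq_sqrt (by positivity)]
    have h2 : ∀ ν, ‖κ ν‖^2 = (x ν)^2 + (y ν)^2 := fun ν => by
      rw [Complex.sq_norm, Complex.normSq_apply]; ring
    simp only [← h2, ← h1, hκ, one_pow]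
  -- facts about P
  have hRtR : Rᵀ * R = 1 := mul_eq_one_comm.mp hR
  have er1 : R 0 0^2 + R 0 1^2 = 1 := by
    have := congrFun (congrFun hR 0) 0
    simpa [Matrix.mul_apply, Fin.sum_univ_succ, Matrix.one_apply, sq] using this
  have er2 : R 1 0^2 + R 1 1^2 = 1 := by
    have := congrFun (congrFun hR 1) 1
    simpa [Matrix.mul_apply, Fin.sum_univ_succ, Matrix.one_apply, sq] using this
  have er3 : R 0 0 * R 1 0 + R 0 1 * R 1 1 = 0 := by
    have := congrFun (congrFun hR 0) 1
    simpa [Matrix.mul_apply, Fin.sum_univ_succ, Matrix.one_apply] using this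
  have ec1 : R 0 0^2 + R 1 0^2 = 1 := by
    have := congrFun (congrFun hRtR 0) 0
    simpa [Matrix.mul_apply, Fin.sum_univ_succ, Matrix.one_apply, sq] using this
  have ec2 : R 0 1^2 + R 1 1^2 = 1 := by
    have := congrFun (congrFun hRtR 1) 1
    simpa [Matrix.mul_apply, Fin.sum_univ_succ, Matrix.one_apply, sq] using this
  have hP00 : P 0 0 = l1 * R 0 0^2 + l2 * R 0 1^2 := by
    rw [hPspec]; simp [Matrix.mul_apply, Matrix.diagonal, Fin.sum_univ_succ]; ring
  have hP01 : P 0 1 = l1 * (R 0 0 * R 1 0) + l2 * (R 0 1 * R 1 1) := by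
    rw [hPspec]; simp [Matrix.mul_apply, Matrix.diagonal, Fin.sum_univ_succ]; ring
  have hP10 : P 1 0 = l1 * (R 0 0 * R 1 0) + l2 * (R 0 1 * R 1 1) := by
    rw [hPspec]; simp [Matrix.mul_apply, Matrix.diagonal, Fin.sum_univ_succ]; ring
  have hP11 : P 1 1 = l1 * R 1 0^2 + l2 * R 1 1^2 := by
    rw [hPspec]; simp [Matrix.mul_apply, Matrix.diagonal, Fin.sum_univ_succ]; ring
  have hb : P 1 0 = P 0 1 := by rw [hP10, hP01]
  have htrP : P 0 0 + P 1 1 = l1 + l2 := by rw [hP00, hP11]; nlinarith [ec1, ec2]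
  have hPquad : ∀ v1 v2 : ℝ,
      l2*(v1^2+v2^2) ≤ P 0 0*v1^2 + (P 0 1 + P 1 0)*v1*v2 + P 1 1*v2^2 := by
    intro v1 v2
    rw [hP00, hP01, hP10, hP11]
    have hid : (l1 * R 0 0^2 + l2 * R 0 1^2)*v1^2
        + (l1 * (R 0 0 * R 1 0) + l2 * (R 0 1 * R 1 1) + (l1 * (R 0 0 * R 1 0) + l2 * (R 0 1 * R 1 1)))*v1*v2
        + (l1 * R 1 0^2 + l2 * R 1 1^2)*v2^2 - l2*(v1^2+v2^2)
        = (l1 - l2)*(R 0 0*v1 + R 1 0*v2)^2 := by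
      linear_combination (l2*v1^2)*er1 + (l2*v2^2)*er2 + (2*l2*v1*v2)*er3
    nlinarith [mul_nonneg (sub_nonneg.mpr hl12) (sq_nonneg (R 0 0 * v1 + R 1 0 * v2)), hid]
  -- symmetry of D
  have hDsym : D 1 0 = D 0 1 := by rw [hD10, hD01, hb]
  -- trace of D
  have htrD : D 0 0 + D 1 1 = l1 + l2 := by
    rw [hD00, hD11, ← Finset.sum_add_distrib]
    have : ∑ ν, (P 0 0*(x ν)^2 + (P 0 1+P 1 0)*(x ν)*(y ν) + P 1 1*(y ν)^2
        + (P 0 0*(y ν)^2 - (P 0 1+P 1 0)*(x ν)*(y ν) + P 1 1*(x ν)^2))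
        = (P 0 0 + P 1 1) * ∑ ν, ((x ν)^2 + (y ν)^2) := by
      rw [Finset.mul_sum]; exact Finset.sum_congr rfl fun ν _ => by ring
    rw [this, hsum, mul_one, htrP]
  -- quadratic form bound for D
  have hDquad : ∀ u1 u2 : ℝ,
      l2*(u1^2+u2^2) ≤ D 0 0*u1^2 + (D 0 1 + D 1 0)*u1*u2 + D 1 1*u2^2 := by
    intro u1 u2
    have hRHS : D 0 0*u1^2 + (D 0 1 + D 1 0)*u1*u2 + D 1 1*u2^2
        = ∑ ν, (P 0 0*(x ν*u1 - y ν*u2)^2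
            + (P 0 1 + P 1 0)*(x ν*u1 - y ν*u2)*(y ν*u1 + x ν*u2)
            + P 1 1*(y ν*u1 + x ν*u2)^2) := by
      rw [hD00, hD01, hD10, hD11]
      simp only [add_mul, sub_mul, Finset.sum_mul, ← Finset.sum_add_distrib,
        ← Finset.sum_sub_distrib]
      exact Finset.sum_congr rfl fun ν _ => by ring
    have hLHS : l2*(u1^2+u2^2)
        = ∑ ν, (l2*(((x ν)^2+(y ν)^2)*(u1^2+u2^2))) := by
      have : ∑ ν, (l2*(((x ν)^2+(y ν)^2)*(u1^2+u2^2)))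
          = (∑ ν, ((x ν)^2 + (y ν)^2)) * (l2*(u1^2+u2^2)) := by
        rw [Finset.sum_mul]; exact Finset.sum_congr rfl fun ν _ => by ring
      rw [this, hsum, one_mul]
    rw [hRHS, hLHS]
    refine Finset.sum_le_sum fun ν _ => ?_
    have h := hPquad (x ν*u1 - y ν*u2) (y ν*u1 + x ν*u2)
    refine le_trans (le_of_eq (by ring)) (le_trans h (le_of_eq (by ring)))
  -- PSD of D - l2 I  ⇒  determinant bound
  have hE : ∀ u1 u2 : ℝ, 0 ≤ (D 0 0 - l2)*u1^2 + 2*(D 0 1)*u1*u2 + (D 1 1 - l2)*u2^2 := by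
    intro u1 u2
    have h := hDquad u1 u2
    rw [hDsym] at h
    nlinarith [h]
  have hdet2 : (D 0 1)^2 ≤ (D 0 0 - l2)*(D 1 1 - l2) := psd_det' _ _ _ hE
  have hdetge : l1*l2 ≤ D.det := by
    rw [Matrix.det_fin_two, hDsym]
    nlinarith [hdet2, htrD]
  have htpos : 0 < D.det := lt_of_lt_of_le (mul_pos (lt_of_lt_of_le hl2 hl12) hl2) hdetge
  -- Frobenius norm of inverse
  have hfro : ∑ i, ∑ j, ((D⁻¹) i j)^2
      = ((l1+l2)^2 - 2*D.det) / (D.det)^2 := by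
    have e0 : (D 0 0)^2 + (D 0 1)^2 + (D 1 0)^2 + (D 1 1)^2 = (l1+l2)^2 - 2*D.det := by
      rw [Matrix.det_fin_two]
      linear_combination (D 0 0 + D 1 1 + l1 + l2) * htrD + (D 1 0 - D 0 1) * hDsym
    have hinv : D⁻¹ = (D.det)⁻¹ • D.adjugate := by
      rw [Matrix.inv_def, Ring.inverse_eq_inv]
    rw [hinv, Matrix.adjugate_fin_two]
    simp only [Fin.sum_univ_succ, Finset.univ_unique, Fin.default_eq_zero, Finset.sum_singleton,
      Matrix.smul_apply, smul_eq_mul, Matrix.cons_val', Matrix.cons_val_zero, Matrix.cons_val_one,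
      Matrix.head_cons, Matrix.empty_val', Matrix.cons_val_fin_one, Matrix.head_fin_const,
      Finset.sum_empty, Matrix.of_apply, Fin.succ_zero_eq_one]
    field_simp
    linear_combination e0
  have : frob (D⁻¹) = Real.sqrt (((l1+l2)^2 - 2*D.det) / (D.det)^2) := by
    rw [frob, hfro]
  rw [this]
  exact final_arith' l1 l2 D.det _ hl2 hl12 rfl hdetge
end
end

section
/- Let P be a 2×2 real symmetric positive definite matrix with eigenvalues λ₁ ≥ λ₂ > 0. Then for every unit vector κ ∈ S_ℂ in ℂ^N and every Y ∈ ℂ^N, |φ̂(κ,P,Y)| ≤ √(2N)·((λ₁² + λ₂²)/(λ₁λ₂))·‖Y‖, where ‖Y‖ is the Euclidean norm on ℂ^N ≅ ℝ^{2N}. -/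
open scoped BigOperators Matrix ComplexOrder
open MeasureTheory Filter Matrix

noncomputable section

lemma aux_sum_mulVec {ι : Type*} (s : Finset ι) (A : ι → Matrix (Fin 2) (Fin 2) ℝ)
    (v : Fin 2 → ℝ) : (∑ ν ∈ s, A ν) *ᵥ v = ∑ ν ∈ s, A ν *ᵥ v := by
  ext i
  simp [Matrix.mulVec, dotProduct, Finset.sum_apply, Matrix.sum_apply, Finset.sum_mul,
    Finset.sum_add_distrib]
  fin_cases i <;> simp [Finset.sum_add_distrib]

lemma aux_dot_sum {ι : Type*} (s : Finset ι) (x : Fin 2 → ℝ) (w : ι → (Fin 2 → ℝ)) :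
    x ⬝ᵥ (∑ ν ∈ s, w ν) = ∑ ν ∈ s, x ⬝ᵥ w ν := by
  simp [dotProduct, Finset.sum_apply, Finset.mul_sum, Fin.sum_univ_two,
    Finset.sum_add_distrib]

lemma MC_transpose (z : ℂ) : (MC z)ᵀ = !![z.re, z.im; -z.im, z.re] := by
  ext i j; fin_cases i <;> fin_cases j <;> simp [MC]

lemma aux_term_quad (A : Matrix (Fin 2) (Fin 2) ℝ) (z : ℂ) (x : Fin 2 → ℝ) :
    x ⬝ᵥ (((MC z)ᵀ * A * MC z) *ᵥ x) = (MC z *ᵥ x) ⬝ᵥ (A *ᵥ (MC z *ᵥ x)) := by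
  rw [MC_transpose]
  simp [Matrix.mul_apply, Matrix.mulVec, Matrix.vecMul, dotProduct, Fin.sum_univ_two, MC]
  ring

lemma aux_term_lin (A : Matrix (Fin 2) (Fin 2) ℝ) (z : ℂ) (w : Fin 2 → ℝ) (x : Fin 2 → ℝ) :
    x ⬝ᵥ (((MC z)ᵀ * A) *ᵥ w) = (MC z *ᵥ x) ⬝ᵥ (A *ᵥ w) := by
  rw [MC_transpose]
  simp [Matrix.mul_apply, Matrix.mulVec, Matrix.vecMul, dotProduct, Fin.sum_univ_two, MC]
  ring

lemma aux_MC_norm (z : ℂ) (x : Fin 2 → ℝ) :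
    (MC z *ᵥ x) 0 ^ 2 + (MC z *ᵥ x) 1 ^ 2 = (z.re ^ 2 + z.im ^ 2) * (x 0 ^ 2 + x 1 ^ 2) := by
  simp [Matrix.mulVec, dotProduct, Fin.sum_univ_two, MC]
  ring

lemma aux_dot_self (v : Fin 2 → ℝ) : v ⬝ᵥ v = v 0 ^ 2 + v 1 ^ 2 := by
  simp [dotProduct, Fin.sum_univ_two]; ring

set_option maxHeartbeats 1600000 in
/-- `|φ̂(κ,P,Y)| ≤ √(2N)·((λ₁²+λ₂²)/(λ₁λ₂))·‖Y‖` for unit `κ` and `Y ∈ ℂ^N`. -/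
theorem phiHat_abs_bound {N : ℕ}
    (P R : Matrix (Fin 2) (Fin 2) ℝ) (l1 l2 : ℝ)
    (hR : R * Rᵀ = 1) (hPspec : P = R * Matrix.diagonal ![l1, l2] * Rᵀ)
    (hl2 : 0 < l2) (hl12 : l2 ≤ l1)
    (κ : CVec N) (hκ : ‖κ‖ = 1) (Y : CVec N) :
    ‖phiHat κ P Y‖ ≤
      Real.sqrt (2 * N) * ((l1 ^ 2 + l2 ^ 2) / (l1 * l2)) * ‖Y‖ := by
  have hl1 : 0 < l1 := lt_of_lt_of_le hl2 hl12
  have hN : 1 ≤ N := by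
    rcases Nat.eq_zero_or_pos N with h | h
    · subst h; rw [EuclideanSpace.norm_eq] at hκ; simp at hκ
    · exact h
  have habs : ∀ z : ℂ, ‖z‖ ^ 2 = z.re ^ 2 + z.im ^ 2 := fun z => by
    rw [Complex.sq_norm, Complex.normSq_apply]; ring
  have sqrtabs : ∀ z : ℂ, Real.sqrt (z.re ^ 2 + z.im ^ 2) = ‖z‖ := fun z => by
    rw [← habs, Real.sqrt_sq (norm_nonneg z)]
  -- entries of R are orthonormal rows
  have e00 : R 0 0 * R 0 0 + R 0 1 * R 0 1 = 1 := by
    have := congrFun (congrFun hR 0) 0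
    simpa [Matrix.mul_apply, Fin.sum_univ_two, Matrix.one_apply] using this
  have e11 : R 1 0 * R 1 0 + R 1 1 * R 1 1 = 1 := by
    have := congrFun (congrFun hR 1) 1
    simpa [Matrix.mul_apply, Fin.sum_univ_two, Matrix.one_apply] using this
  have e01 : R 0 0 * R 1 0 + R 0 1 * R 1 1 = 0 := by
    have := congrFun (congrFun hR 0) 1
    simpa [Matrix.mul_apply, Fin.sum_univ_two, Matrix.one_apply] using this
  -- key quadratic form identity
  have key : ∀ u v : Fin 2 → ℝ, u ⬝ᵥ (P *ᵥ v) =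
      l1 * ((Rᵀ *ᵥ u) 0 * (Rᵀ *ᵥ v) 0) + l2 * ((Rᵀ *ᵥ u) 1 * (Rᵀ *ᵥ v) 1) := by
    intro u v
    subst hPspec
    simp [Matrix.mul_apply, Matrix.mulVec, Matrix.vecMul, dotProduct, Fin.sum_univ_two,
      Matrix.diagonal]
    ring
  have hnorm : ∀ v : Fin 2 → ℝ, (Rᵀ *ᵥ v) 0 ^ 2 + (Rᵀ *ᵥ v) 1 ^ 2 = v 0 ^ 2 + v 1 ^ 2 := by
    intro v
    simp only [Matrix.mulVec, dotProduct, Fin.sum_univ_two, Matrix.transpose_apply]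
    linear_combination v 0 ^ 2 * e00 + v 1 ^ 2 * e11 + 2 * v 0 * v 1 * e01
  have coer : ∀ v : Fin 2 → ℝ, l2 * (v 0 ^ 2 + v 1 ^ 2) ≤ v ⬝ᵥ (P *ᵥ v) := by
    intro v
    rw [key v v, ← hnorm v]
    nlinarith [sq_nonneg ((Rᵀ *ᵥ v) 0)]
  have cs2 : ∀ a0 a1 b0 b1 : ℝ, a0 * b0 + a1 * b1 ≤
      Real.sqrt (a0 ^ 2 + a1 ^ 2) * Real.sqrt (b0 ^ 2 + b1 ^ 2) := by
    intro a0 a1 b0 b1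
    have h1 : a0 * b0 + a1 * b1 ≤ Real.sqrt ((a0 ^ 2 + a1 ^ 2) * (b0 ^ 2 + b1 ^ 2)) := by
      rcases le_or_gt (a0 * b0 + a1 * b1) 0 with h | h
      · exact h.trans (Real.sqrt_nonneg _)
      · rw [Real.le_sqrt h.le (by positivity)]
        nlinarith [sq_nonneg (a0 * b1 - a1 * b0)]
    rwa [Real.sqrt_mul (by positivity)] at h1
  have bndP : ∀ u v : Fin 2 → ℝ, u ⬝ᵥ (P *ᵥ v) ≤
      l1 * (Real.sqrt (u 0 ^ 2 + u 1 ^ 2) * Real.sqrt (v 0 ^ 2 + v 1 ^ 2)) := by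
    intro u v
    rw [key u v]
    have h1 : l1 * ((Rᵀ *ᵥ u) 0 * (Rᵀ *ᵥ v) 0) + l2 * ((Rᵀ *ᵥ u) 1 * (Rᵀ *ᵥ v) 1) ≤
        l1 * (|(Rᵀ *ᵥ u) 0| * |(Rᵀ *ᵥ v) 0| + |(Rᵀ *ᵥ u) 1| * |(Rᵀ *ᵥ v) 1|) := by
      have t0 := le_abs_self ((Rᵀ *ᵥ u) 0 * (Rᵀ *ᵥ v) 0)
      have t1 := le_abs_self ((Rᵀ *ᵥ u) 1 * (Rᵀ *ᵥ v) 1)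
      rw [abs_mul] at t0 t1
      have habs1 : (0:ℝ) ≤ |(Rᵀ *ᵥ u) 1| * |(Rᵀ *ᵥ v) 1| :=
        mul_nonneg (abs_nonneg _) (abs_nonneg _)
      nlinarith [mul_nonneg (sub_nonneg.mpr hl12) habs1,
        mul_nonneg hl2.le (sub_nonneg.mpr t1), mul_nonneg hl1.le (sub_nonneg.mpr t0)]
    have h2 := cs2 |(Rᵀ *ᵥ u) 0| |(Rᵀ *ᵥ u) 1| |(Rᵀ *ᵥ v) 0| |(Rᵀ *ᵥ v) 1|
    rw [sq_abs, sq_abs, sq_abs, sq_abs, hnorm u, hnorm v] at h2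
    nlinarith [h1, h2, hl1]
  -- sums
  have hκ1 : ∑ ν, ((κ ν).re ^ 2 + (κ ν).im ^ 2) = 1 := by
    rw [EuclideanSpace.norm_eq, Real.sqrt_eq_one] at hκ
    simp_rw [← habs]
    simpa using hκ
  have hY1 : ∑ ν, ‖Y ν‖ ^ 2 = ‖Y‖ ^ 2 := by
    rw [EuclideanSpace.norm_eq, Real.sq_sqrt (by positivity)]
  have hCS : ∑ ν, ‖κ ν‖ * ‖Y ν‖ ≤ ‖Y‖ := by
    have h := Finset.sum_mul_sq_le_sq_mul_sq Finset.univ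
      (fun ν => ‖κ ν‖) (fun ν => ‖Y ν‖)
    simp only [hY1] at h
    have hκ1' : ∑ ν, ‖κ ν‖ ^ 2 = 1 := by simp_rw [habs]; exact hκ1
    rw [hκ1', one_mul] at h
    have hnn : 0 ≤ ∑ ν, ‖κ ν‖ * ‖Y ν‖ := by positivity
    nlinarith [norm_nonneg Y]
  -- coercivity of diaA
  have coD : ∀ v : Fin 2 → ℝ, l2 * (v 0 ^ 2 + v 1 ^ 2) ≤ v ⬝ᵥ (diaA P κ κ *ᵥ v) := by
    intro v
    have h1 : v ⬝ᵥ (diaA P κ κ *ᵥ v) =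
        ∑ ν, (MC (κ ν) *ᵥ v) ⬝ᵥ (P *ᵥ (MC (κ ν) *ᵥ v)) := by
      rw [diaA, aux_sum_mulVec, aux_dot_sum]
      exact Finset.sum_congr rfl fun ν _ => aux_term_quad P (κ ν) v
    rw [h1]
    calc l2 * (v 0 ^ 2 + v 1 ^ 2)
        = ∑ ν, l2 * ((MC (κ ν) *ᵥ v) 0 ^ 2 + (MC (κ ν) *ᵥ v) 1 ^ 2) := by
          simp_rw [aux_MC_norm]
          have h2 : ∑ ν, l2 * (((κ ν).re ^ 2 + (κ ν).im ^ 2) * (v 0 ^ 2 + v 1 ^ 2)) =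
              l2 * (v 0 ^ 2 + v 1 ^ 2) * ∑ ν, ((κ ν).re ^ 2 + (κ ν).im ^ 2) := by
            rw [Finset.mul_sum]; exact Finset.sum_congr rfl fun ν _ => by ring
          rw [h2, hκ1, mul_one]
      _ ≤ _ := Finset.sum_le_sum fun ν _ => coer _
  -- invertibility
  have hdet : IsUnit (diaA P κ κ).det := by
    rw [isUnit_iff_ne_zero]
    intro h0
    obtain ⟨v, hv, hDv⟩ := (Matrix.exists_mulVec_eq_zero_iff).mpr h0
    have h1 := coD v
    rw [hDv] at h1
    simp only [dotProduct, Pi.zero_apply, mul_zero, Finset.sum_const_zero] at h1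
    have hv' : v 0 ≠ 0 ∨ v 1 ≠ 0 := by
      by_contra hc
      push_neg at hc
      exact hv (funext fun i => by fin_cases i <;> simp [hc.1, hc.2])
    rcases hv' with h | h
    · nlinarith [sq_nonneg (v 1), pow_pos (abs_pos.mpr h) 2, sq_abs (v 0)]
    · nlinarith [sq_nonneg (v 0), pow_pos (abs_pos.mpr h) 2, sq_abs (v 1)]
  set x : Fin 2 → ℝ := (diaA P κ κ)⁻¹ *ᵥ bulA P κ Y with hxdef
  have hDxb : diaA P κ κ *ᵥ x = bulA P κ Y := by
    rw [hxdef, Matrix.mulVec_mulVec, Matrix.mul_nonsing_inv _ hdet, Matrix.one_mulVec]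
  have low : l2 * (x 0 ^ 2 + x 1 ^ 2) ≤ x ⬝ᵥ bulA P κ Y := by
    have h := coD x
    rwa [hDxb] at h
  have hxb : x ⬝ᵥ bulA P κ Y = ∑ ν, (MC (κ ν) *ᵥ x) ⬝ᵥ (P *ᵥ vecC (Y ν)) := by
    rw [bulA, aux_dot_sum]
    exact Finset.sum_congr rfl fun ν _ => aux_term_lin P (κ ν) (vecC (Y ν)) x
  have up : x ⬝ᵥ bulA P κ Y ≤ l1 * Real.sqrt (x 0 ^ 2 + x 1 ^ 2) * ‖Y‖ := by
    rw [hxb]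
    have step1 : ∀ ν, (MC (κ ν) *ᵥ x) ⬝ᵥ (P *ᵥ vecC (Y ν)) ≤
        l1 * (‖κ ν‖ * Real.sqrt (x 0 ^ 2 + x 1 ^ 2) * ‖Y ν‖) := by
      intro ν
      have h := bndP (MC (κ ν) *ᵥ x) (vecC (Y ν))
      have h2 : Real.sqrt ((MC (κ ν) *ᵥ x) 0 ^ 2 + (MC (κ ν) *ᵥ x) 1 ^ 2) =
          ‖κ ν‖ * Real.sqrt (x 0 ^ 2 + x 1 ^ 2) := by
        rw [aux_MC_norm, Real.sqrt_mul (by positivity), sqrtabs]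
      have h3 : Real.sqrt ((vecC (Y ν)) 0 ^ 2 + (vecC (Y ν)) 1 ^ 2) = ‖Y ν‖ := by
        simp only [vecC, Matrix.cons_val_zero, Matrix.cons_val_one, Matrix.head_cons]
        exact sqrtabs _
      rw [h2, h3] at h
      linarith [h]
    calc ∑ ν, (MC (κ ν) *ᵥ x) ⬝ᵥ (P *ᵥ vecC (Y ν))
        ≤ ∑ ν, l1 * (‖κ ν‖ * Real.sqrt (x 0 ^ 2 + x 1 ^ 2) * ‖Y ν‖) :=
          Finset.sum_le_sum fun ν _ => step1 ν
      _ = l1 * Real.sqrt (x 0 ^ 2 + x 1 ^ 2) *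
          ∑ ν, ‖κ ν‖ * ‖Y ν‖ := by
          rw [Finset.mul_sum]; exact Finset.sum_congr rfl fun ν _ => by ring
      _ ≤ l1 * Real.sqrt (x 0 ^ 2 + x 1 ^ 2) * ‖Y‖ :=
          mul_le_mul_of_nonneg_left hCS (by positivity)
  -- combine
  have hs2 : Real.sqrt (x 0 ^ 2 + x 1 ^ 2) ^ 2 = x 0 ^ 2 + x 1 ^ 2 :=
    Real.sq_sqrt (by positivity)
  have hsle : Real.sqrt (x 0 ^ 2 + x 1 ^ 2) ≤ l1 / l2 * ‖Y‖ := by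
    have hkey : l2 * Real.sqrt (x 0 ^ 2 + x 1 ^ 2) ^ 2 ≤
        l1 * Real.sqrt (x 0 ^ 2 + x 1 ^ 2) * ‖Y‖ := by
      rw [hs2]; exact low.trans up
    rcases eq_or_lt_of_le (Real.sqrt_nonneg (x 0 ^ 2 + x 1 ^ 2)) with h | h
    · rw [← h]; positivity
    · rw [div_mul_eq_mul_div, le_div_iff₀ hl2]; nlinarith
  have habsphi : ‖phiHat κ P Y‖ = Real.sqrt (x 0 ^ 2 + x 1 ^ 2) := by
    unfold phiHat
    rw [← hxdef]
    exact Complex.norm_add_mul_I _ _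
  rw [habsphi]
  have h1 : l1 / l2 ≤ (l1 ^ 2 + l2 ^ 2) / (l1 * l2) := by
    rw [div_le_div_iff₀ hl2 (by positivity)]
    nlinarith [sq_nonneg l2]
  have hsq : (1 : ℝ) ≤ Real.sqrt (2 * N) := by
    rw [show (1 : ℝ) = Real.sqrt 1 from Real.sqrt_one.symm]
    apply Real.sqrt_le_sqrt
    have : (1 : ℝ) ≤ N := by exact_mod_cast hN
    linarith
  have h2 : l1 / l2 ≤ Real.sqrt (2 * N) * ((l1 ^ 2 + l2 ^ 2) / (l1 * l2)) := by
    calc l1 / l2 ≤ (l1 ^ 2 + l2 ^ 2) / (l1 * l2) := h1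
      _ ≤ Real.sqrt (2 * N) * ((l1 ^ 2 + l2 ^ 2) / (l1 * l2)) :=
        le_mul_of_one_le_left (by positivity) hsq
  calc Real.sqrt (x 0 ^ 2 + x 1 ^ 2) ≤ l1 / l2 * ‖Y‖ := hsle
    _ ≤ Real.sqrt (2 * N) * ((l1 ^ 2 + l2 ^ 2) / (l1 * l2)) * ‖Y‖ :=
      mul_le_mul_of_nonneg_right h2 (norm_nonneg Y)
end
end

section
/- Let P be a 2×2 real symmetric positive definite matrix with eigenvalues λ₁ ≥ λ₂ > 0. Then for all unit vectors κ, κ' ∈ S_ℂ in ℂ^N, the Frobenius norm of the difference of inverses satisfies ‖(κ ⋄_P κ)⁻¹ − (κ' ⋄_P κ')⁻¹‖_F ≤ (4√N·√(λ₁² + λ₂²)/(λ₁λ₂) + 16√N·(λ₁² + λ₂²)^{3/2}/(λ₁λ₂)²)·‖κ − κ'‖, where ‖κ − κ'‖ is the Euclidean norm on ℂ^N ≅ ℝ^{2N}. -/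
open scoped BigOperators Matrix ComplexOrder
open MeasureTheory Filter Matrix

noncomputable section

-- Auxiliary lemmas
section Aux

lemma MC00 (z : ℂ) : MC z 0 0 = z.re := rfl
lemma MC01 (z : ℂ) : MC z 0 1 = -z.im := rfl
lemma MC10 (z : ℂ) : MC z 1 0 = z.im := rfl
lemma MC11 (z : ℂ) : MC z 1 1 = z.re := rfl


lemma frob_exp (A : Matrix (Fin 2) (Fin 2) ℝ) :
    frob A = Real.sqrt (A 0 0^2 + A 0 1^2 + A 1 0^2 + A 1 1^2) := by
  unfold frob
  rw [Fin.sum_univ_two, Fin.sum_univ_two, Fin.sum_univ_two]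
  congr 1; ring

lemma cs4 (e0 e1 e2 e3 a0 a1 a2 a3 : ℝ) :
    |e0*a0 + e1*a1 + e2*a2 + e3*a3| ≤
      Real.sqrt (e0^2+e1^2+e2^2+e3^2) * Real.sqrt (a0^2+a1^2+a2^2+a3^2) := by
  have h : (e0*a0 + e1*a1 + e2*a2 + e3*a3)^2 ≤ (e0^2+e1^2+e2^2+e3^2) * (a0^2+a1^2+a2^2+a3^2) := by
    nlinarith [sq_nonneg (e0*a1 - e1*a0), sq_nonneg (e0*a2 - e2*a0), sq_nonneg (e0*a3 - e3*a0),
      sq_nonneg (e1*a2 - e2*a1), sq_nonneg (e1*a3 - e3*a1), sq_nonneg (e2*a3 - e3*a2)]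
  calc |e0*a0 + e1*a1 + e2*a2 + e3*a3| = Real.sqrt ((e0*a0 + e1*a1 + e2*a2 + e3*a3)^2) :=
        (Real.sqrt_sq_eq_abs _).symm
    _ ≤ Real.sqrt ((e0^2+e1^2+e2^2+e3^2) * (a0^2+a1^2+a2^2+a3^2)) := Real.sqrt_le_sqrt h
    _ = _ := Real.sqrt_mul (by positivity) _

lemma frob_nonneg (A : Matrix (Fin 2) (Fin 2) ℝ) : 0 ≤ frob A := Real.sqrt_nonneg _

lemma frob_add_le (A B : Matrix (Fin 2) (Fin 2) ℝ) : frob (A + B) ≤ frob A + frob B := by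
  rw [frob_exp, frob_exp, frob_exp]
  simp only [Matrix.add_apply]
  have key := cs4 (A 0 0) (A 0 1) (A 1 0) (A 1 1) (B 0 0) (B 0 1) (B 1 0) (B 1 1)
  have key2 : A 0 0 * B 0 0 + A 0 1 * B 0 1 + A 1 0 * B 1 0 + A 1 1 * B 1 1 ≤
      Real.sqrt (A 0 0^2 + A 0 1^2 + A 1 0^2 + A 1 1^2) *
      Real.sqrt (B 0 0^2 + B 0 1^2 + B 1 0^2 + B 1 1^2) := le_trans (le_abs_self _) key
  have eA : Real.sqrt (A 0 0^2 + A 0 1^2 + A 1 0^2 + A 1 1^2)^2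
      = A 0 0^2 + A 0 1^2 + A 1 0^2 + A 1 1^2 := Real.sq_sqrt (by positivity)
  have eB : Real.sqrt (B 0 0^2 + B 0 1^2 + B 1 0^2 + B 1 1^2)^2
      = B 0 0^2 + B 0 1^2 + B 1 0^2 + B 1 1^2 := Real.sq_sqrt (by positivity)
  rw [show Real.sqrt (A 0 0^2 + A 0 1^2 + A 1 0^2 + A 1 1^2) +
      Real.sqrt (B 0 0^2 + B 0 1^2 + B 1 0^2 + B 1 1^2)
      = Real.sqrt ((Real.sqrt (A 0 0^2 + A 0 1^2 + A 1 0^2 + A 1 1^2) +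
        Real.sqrt (B 0 0^2 + B 0 1^2 + B 1 0^2 + B 1 1^2))^2) from
      (Real.sqrt_sq (by positivity)).symm]
  apply Real.sqrt_le_sqrt
  nlinarith [key2, eA, eB]

lemma frob_zero : frob 0 = 0 := by simp [frob]

lemma frob_sum_le {ι : Type*} (s : Finset ι) (X : ι → Matrix (Fin 2) (Fin 2) ℝ) :
    frob (∑ i ∈ s, X i) ≤ ∑ i ∈ s, frob (X i) := by
  classical
  induction s using Finset.induction_on with
  | empty => simp [frob_zero]
  | insert _ _ h ih =>
    rw [Finset.sum_insert h, Finset.sum_insert h]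
    exact (frob_add_le _ _).trans (by linarith)

lemma frob_smul (c : ℝ) (A : Matrix (Fin 2) (Fin 2) ℝ) : frob (c • A) = |c| * frob A := by
  rw [frob_exp, frob_exp]
  simp only [Matrix.smul_apply, smul_eq_mul]
  rw [show (c * A 0 0)^2 + (c * A 0 1)^2 + (c * A 1 0)^2 + (c * A 1 1)^2
      = c^2 * (A 0 0^2 + A 0 1^2 + A 1 0^2 + A 1 1^2) from by ring,
    Real.sqrt_mul (sq_nonneg c), Real.sqrt_sq_eq_abs]

lemma frob_mul_mc (X : Matrix (Fin 2) (Fin 2) ℝ) (z : ℂ) :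
    frob (X * MC z) = ‖z‖ * frob X := by
  have h : ∀ i j, (X * MC z) i j = X i 0 * MC z 0 j + X i 1 * MC z 1 j := fun i j => by
    rw [Matrix.mul_apply, Fin.sum_univ_two]
  rw [frob_exp, frob_exp, h, h, h, h]
  simp only [MC, Matrix.cons_val', Matrix.cons_val_zero, Matrix.cons_val_one, Matrix.head_cons,
    Matrix.empty_val', Matrix.cons_val_fin_one, Matrix.of_apply, Matrix.head_fin_const]
  rw [Complex.norm_def, Complex.normSq_apply, ← Real.sqrt_mul (add_nonneg (mul_self_nonneg z.re) (mul_self_nonneg z.im))]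
  congr 1; ring

lemma frob_mcT_mul (X : Matrix (Fin 2) (Fin 2) ℝ) (z : ℂ) :
    frob ((MC z)ᵀ * X) = ‖z‖ * frob X := by
  have h : ∀ i j, ((MC z)ᵀ * X) i j = MC z 0 i * X 0 j + MC z 1 i * X 1 j := fun i j => by
    rw [Matrix.mul_apply, Fin.sum_univ_two]; rfl
  rw [frob_exp, frob_exp, h, h, h, h]
  simp only [MC, Matrix.cons_val', Matrix.cons_val_zero, Matrix.cons_val_one, Matrix.head_cons,
    Matrix.empty_val', Matrix.cons_val_fin_one, Matrix.of_apply, Matrix.head_fin_const]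
  rw [Complex.norm_def, Complex.normSq_apply, ← Real.sqrt_mul (add_nonneg (mul_self_nonneg z.re) (mul_self_nonneg z.im))]
  congr 1; ring

lemma MC_sub (z w : ℂ) : MC (z - w) = MC z - MC w := by
  ext i j; fin_cases i <;> fin_cases j <;> simp [MC] <;> ring

lemma diaA_sub_decomp {N : ℕ} (A : Matrix (Fin 2) (Fin 2) ℝ) (κ κ' : CVec N) :
    diaA A κ κ - diaA A κ' κ' = diaA A (κ - κ') κ + diaA A κ' (κ - κ') := by
  unfold diaA
  rw [← Finset.sum_sub_distrib, ← Finset.sum_add_distrib]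
  refine Finset.sum_congr rfl fun ν _ => ?_
  have hs : (κ - κ') ν = κ ν - κ' ν := rfl
  rw [hs, MC_sub, Matrix.transpose_sub, Matrix.sub_mul, Matrix.sub_mul, Matrix.mul_sub]
  abel

lemma frob_adjugate (A : Matrix (Fin 2) (Fin 2) ℝ) : frob (Matrix.adjugate A) = frob A := by
  rw [Matrix.adjugate_fin_two, frob_exp, frob_exp]
  simp only [Matrix.cons_val', Matrix.cons_val_zero, Matrix.cons_val_one, Matrix.head_cons,
    Matrix.empty_val', Matrix.cons_val_fin_one, Matrix.of_apply, Matrix.head_fin_const]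
  congr 1; ring

lemma frob_adj_sub (A B : Matrix (Fin 2) (Fin 2) ℝ) :
    frob (Matrix.adjugate A - Matrix.adjugate B) = frob (A - B) := by
  rw [Matrix.adjugate_fin_two, Matrix.adjugate_fin_two, frob_exp, frob_exp]
  simp only [Matrix.sub_apply, Matrix.cons_val', Matrix.cons_val_zero, Matrix.cons_val_one,
    Matrix.head_cons, Matrix.empty_val', Matrix.cons_val_fin_one, Matrix.of_apply,
    Matrix.head_fin_const]
  congr 1; ring

lemma det_diff_le (A B : Matrix (Fin 2) (Fin 2) ℝ) :
    |A.det - B.det| ≤ (frob A + frob B) / 2 * frob (A - B) := by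
  have hpair := cs4 (A 0 0 - B 0 0) (A 0 1 - B 0 1) (A 1 0 - B 1 0) (A 1 1 - B 1 1)
      (A 1 1 + B 1 1) (-(A 1 0 + B 1 0)) (-(A 0 1 + B 0 1)) (A 0 0 + B 0 0)
  have hE : Real.sqrt ((A 0 0 - B 0 0)^2 + (A 0 1 - B 0 1)^2 + (A 1 0 - B 1 0)^2
      + (A 1 1 - B 1 1)^2) = frob (A - B) := by
    rw [frob_exp]; simp only [Matrix.sub_apply]
  have hS : Real.sqrt ((A 1 1 + B 1 1)^2 + (-(A 1 0 + B 1 0))^2 + (-(A 0 1 + B 0 1))^2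
      + (A 0 0 + B 0 0)^2) = frob (A + B) := by
    rw [frob_exp]; simp only [Matrix.add_apply]; congr 1; ring
  rw [hE, hS] at hpair
  have hAB : frob (A + B) ≤ frob A + frob B := frob_add_le A B
  have hid : A.det - B.det
      = (1/2) * ((A 0 0 - B 0 0)*(A 1 1 + B 1 1) + (A 0 1 - B 0 1)*(-(A 1 0 + B 1 0))
        + (A 1 0 - B 1 0)*(-(A 0 1 + B 0 1)) + (A 1 1 - B 1 1)*(A 0 0 + B 0 0)) := by
    rw [Matrix.det_fin_two, Matrix.det_fin_two]; ring
  rw [hid, abs_mul]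
  rw [show |(1:ℝ)/2| = 1/2 from by norm_num]
  nlinarith [hpair, hAB, frob_nonneg (A - B), abs_nonneg ((A 0 0 - B 0 0)*(A 1 1 + B 1 1) + (A 0 1 - B 0 1)*(-(A 1 0 + B 1 0)) + (A 1 0 - B 1 0)*(-(A 0 1 + B 0 1)) + (A 1 1 - B 1 1)*(A 0 0 + B 0 0))]

lemma frob_diaA_le {N : ℕ} (Q : Matrix (Fin 2) (Fin 2) ℝ) (z w : CVec N) :
    frob (diaA Q z w) ≤ frob Q * (‖z‖ * ‖w‖) := by
  unfold diaA
  refine (frob_sum_le Finset.univ _).trans ?_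
  have h : ∀ ν : Fin N, frob ((MC (z ν))ᵀ * Q * MC (w ν)) = ‖z ν‖ * ‖w ν‖ * frob Q := fun ν => by
    rw [frob_mul_mc, frob_mcT_mul]; ring
  rw [Finset.sum_congr rfl fun ν _ => h ν, ← Finset.sum_mul]
  have cs : ∑ ν, ‖z ν‖ * ‖w ν‖ ≤ ‖z‖ * ‖w‖ := by
    rw [EuclideanSpace.norm_eq z, EuclideanSpace.norm_eq w]
    have h2 := Finset.sum_mul_sq_le_sq_mul_sq Finset.univ (fun ν => ‖z ν‖) (fun ν => ‖w ν‖)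
    calc ∑ ν, ‖z ν‖ * ‖w ν‖ = Real.sqrt ((∑ ν, ‖z ν‖ * ‖w ν‖)^2) :=
          (Real.sqrt_sq (by positivity)).symm
      _ ≤ Real.sqrt ((∑ ν, ‖z ν‖^2) * (∑ ν, ‖w ν‖^2)) := Real.sqrt_le_sqrt h2
      _ = _ := Real.sqrt_mul (by positivity) _
  calc (∑ ν, ‖z ν‖ * ‖w ν‖) * frob Q ≤ (‖z‖ * ‖w‖) * frob Q :=
        mul_le_mul_of_nonneg_right cs (frob_nonneg Q)
    _ = frob Q * (‖z‖ * ‖w‖) := by ring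

lemma det_diaA_ge {N : ℕ} (a b c l1 l2 : ℝ) (hdetP : a * c - b * b = l1 * l2)
    (z : CVec N) (hz : ‖z‖ = 1) :
    l1 * l2 ≤ (diaA !![a, b; b, c] z z).det := by
  set X := ∑ ν, (z ν).re^2 with hXdef
  set Y := ∑ ν, (z ν).im^2 with hYdef
  set W := ∑ ν, (z ν).re * (z ν).im with hWdef
  have hXY : X + Y = 1 := by
    have h2 : ∑ ν, ‖z ν‖^2 = 1 := by
      have h : Real.sqrt (∑ ν, ‖z ν‖^2) = 1 := by rw [← EuclideanSpace.norm_eq]; exact hz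
      rwa [Real.sqrt_eq_one] at h
    rw [hXdef, hYdef, ← Finset.sum_add_distrib, ← h2]
    refine Finset.sum_congr rfl fun ν _ => ?_
    rw [Complex.sq_norm, Complex.normSq_apply]; ring
  have hW : W^2 ≤ X * Y := by
    rw [hXdef, hYdef, hWdef]
    exact Finset.sum_mul_sq_le_sq_mul_sq Finset.univ _ _
  have e : ∀ i j, diaA !![a,b;b,c] z z i j
      = ∑ ν, ((MC (z ν))ᵀ * !![a,b;b,c] * MC (z ν)) i j := fun i j => by
    unfold diaA; rw [Matrix.sum_apply]
  have e00 : diaA !![a,b;b,c] z z 0 0 = a * X + 2*b*W + c * Y := by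
    have h : ∀ ν : Fin N, ((MC (z ν))ᵀ * !![a,b;b,c] * MC (z ν)) 0 0
        = a * (z ν).re^2 + 2*b*((z ν).re * (z ν).im) + c * (z ν).im^2 := fun ν => by
      simp only [Matrix.mul_apply, Fin.sum_univ_two, Matrix.transpose_apply, MC00, MC01, MC10,
        MC11, Matrix.cons_val_zero, Matrix.cons_val_one, Matrix.head_cons, Matrix.head_fin_const,
        Matrix.cons_val', Matrix.empty_val', Matrix.cons_val_fin_one, Matrix.of_apply]
      ring
    rw [e, Finset.sum_congr rfl fun ν _ => h ν, hXdef, hYdef, hWdef,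
      Finset.mul_sum, Finset.mul_sum, Finset.mul_sum, ← Finset.sum_add_distrib,
      ← Finset.sum_add_distrib]
  have e11 : diaA !![a,b;b,c] z z 1 1 = a * Y - 2*b*W + c * X := by
    have h : ∀ ν : Fin N, ((MC (z ν))ᵀ * !![a,b;b,c] * MC (z ν)) 1 1
        = a * (z ν).im^2 - 2*b*((z ν).re * (z ν).im) + c * (z ν).re^2 := fun ν => by
      simp only [Matrix.mul_apply, Fin.sum_univ_two, Matrix.transpose_apply, MC00, MC01, MC10,
        MC11, Matrix.cons_val_zero, Matrix.cons_val_one, Matrix.head_cons, Matrix.head_fin_const,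
        Matrix.cons_val', Matrix.empty_val', Matrix.cons_val_fin_one, Matrix.of_apply]
      ring
    rw [e, Finset.sum_congr rfl fun ν _ => h ν, hXdef, hYdef, hWdef,
      Finset.mul_sum, Finset.mul_sum, Finset.mul_sum, ← Finset.sum_sub_distrib,
      ← Finset.sum_add_distrib]
  have e01 : diaA !![a,b;b,c] z z 0 1 = b * (X - Y) + (c - a) * W := by
    have h : ∀ ν : Fin N, ((MC (z ν))ᵀ * !![a,b;b,c] * MC (z ν)) 0 1
        = b * ((z ν).re^2 - (z ν).im^2) + (c - a) * ((z ν).re * (z ν).im) := fun ν => by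
      simp only [Matrix.mul_apply, Fin.sum_univ_two, Matrix.transpose_apply, MC00, MC01, MC10,
        MC11, Matrix.cons_val_zero, Matrix.cons_val_one, Matrix.head_cons, Matrix.head_fin_const,
        Matrix.cons_val', Matrix.empty_val', Matrix.cons_val_fin_one, Matrix.of_apply]
      ring
    rw [e, Finset.sum_congr rfl fun ν _ => h ν, hXdef, hYdef, hWdef,
      ← Finset.sum_sub_distrib, Finset.mul_sum, Finset.mul_sum, ← Finset.sum_add_distrib]
  have e10 : diaA !![a,b;b,c] z z 1 0 = b * (X - Y) + (c - a) * W := by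
    have h : ∀ ν : Fin N, ((MC (z ν))ᵀ * !![a,b;b,c] * MC (z ν)) 1 0
        = b * ((z ν).re^2 - (z ν).im^2) + (c - a) * ((z ν).re * (z ν).im) := fun ν => by
      simp only [Matrix.mul_apply, Fin.sum_univ_two, Matrix.transpose_apply, MC00, MC01, MC10,
        MC11, Matrix.cons_val_zero, Matrix.cons_val_one, Matrix.head_cons, Matrix.head_fin_const,
        Matrix.cons_val', Matrix.empty_val', Matrix.cons_val_fin_one, Matrix.of_apply]
      ring
    rw [e, Finset.sum_congr rfl fun ν _ => h ν, hXdef, hYdef, hWdef,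
      ← Finset.sum_sub_distrib, Finset.mul_sum, Finset.mul_sum, ← Finset.sum_add_distrib]
  rw [Matrix.det_fin_two, e00, e01, e10, e11]
  have key : (a*X + 2*b*W + c*Y) * (a*Y - 2*b*W + c*X)
      - (b*(X-Y) + (c-a)*W) * (b*(X-Y) + (c-a)*W)
      = l1*l2 + ((a-c)^2 + 4*b^2) * (X*Y - W^2) := by
    linear_combination (X+Y)^2 * hdetP + l1*l2*(X+Y+1) * hXY
  have hprod : 0 ≤ ((a-c)^2 + 4*b^2) * (X*Y - W^2) :=
    mul_nonneg (by positivity) (by linarith)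
  linarith [key, hprod]

end Aux

set_option maxHeartbeats 1000000 in
/-- Frobenius norm bound on the difference of inverses
`‖(κ ⋄_P κ)⁻¹ − (κ' ⋄_P κ')⁻¹‖_F` for unit `κ, κ'`. -/
theorem dia_inv_diff_bound {N : ℕ}
    (P R : Matrix (Fin 2) (Fin 2) ℝ) (l1 l2 : ℝ)
    (hR : R * Rᵀ = 1) (hPspec : P = R * Matrix.diagonal ![l1, l2] * Rᵀ)
    (hl2 : 0 < l2) (hl12 : l2 ≤ l1)
    (κ κ' : CVec N) (hκ : ‖κ‖ = 1) (hκ' : ‖κ'‖ = 1) :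
    frob ((diaA P κ κ)⁻¹ - (diaA P κ' κ')⁻¹) ≤
      (4 * Real.sqrt N * Real.sqrt (l1 ^ 2 + l2 ^ 2) / (l1 * l2) +
        16 * Real.sqrt N * ((l1 ^ 2 + l2 ^ 2) * Real.sqrt (l1 ^ 2 + l2 ^ 2)) / (l1 * l2) ^ 2) *
        ‖κ - κ'‖ := by
  rcases Nat.eq_zero_or_pos N with hN0 | hNpos
  · exfalso
    subst hN0
    rw [EuclideanSpace.norm_eq] at hκ
    simp at hκ
  have hN1 : (1:ℝ) ≤ Real.sqrt N := by
    rw [show (1:ℝ) = Real.sqrt 1 from Real.sqrt_one.symm]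
    exact Real.sqrt_le_sqrt (by exact_mod_cast hNpos)
  have hS0 : (0:ℝ) ≤ Real.sqrt (l1^2 + l2^2) := Real.sqrt_nonneg _
  have he0 : (0:ℝ) ≤ ‖κ - κ'‖ := norm_nonneg _
  have hT0 : (0:ℝ) ≤ l1^2 + l2^2 := by positivity
  -- scalar facts about P
  have hRR : Rᵀ * R = 1 := mul_eq_one_comm.mp hR
  have hPsymm : Pᵀ = P := by
    rw [hPspec]
    simp [Matrix.transpose_mul, Matrix.mul_assoc]
  have hb : P 1 0 = P 0 1 := by
    conv_lhs => rw [← hPsymm, Matrix.transpose_apply]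
  have hdet1 : R.det * Rᵀ.det = 1 := by rw [← Matrix.det_mul, hR, Matrix.det_one]
  have hdetP : P.det = l1 * l2 := by
    have hD : (Matrix.diagonal ![l1, l2]).det = l1 * l2 := by
      rw [Matrix.det_diagonal, Fin.prod_univ_two]
      simp
    rw [hPspec, Matrix.det_mul, Matrix.det_mul, hD]
    calc R.det * (l1*l2) * Rᵀ.det = (R.det * Rᵀ.det) * (l1*l2) := by ring
      _ = l1*l2 := by rw [hdet1, one_mul]
  have hPP : P * Pᵀ
      = R * (Matrix.diagonal ![l1,l2] * (Matrix.diagonal ![l1,l2] * Rᵀ)) := by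
    rw [hPspec, Matrix.transpose_mul, Matrix.transpose_mul, Matrix.transpose_transpose,
      Matrix.diagonal_transpose]
    simp only [Matrix.mul_assoc]
    rw [← Matrix.mul_assoc Rᵀ R, hRR, Matrix.one_mul]
  have htrPP : Matrix.trace (P * Pᵀ) = l1^2 + l2^2 := by
    rw [hPP, Matrix.trace_mul_comm]
    simp only [Matrix.mul_assoc]
    rw [hRR, Matrix.mul_one, Matrix.diagonal_mul_diagonal, Matrix.trace_diagonal]
    simp [Fin.sum_univ_two] <;> ring
  have hfrob2 : P 0 0^2 + P 0 1^2 + P 1 0^2 + P 1 1^2 = l1^2 + l2^2 := by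
    have h : Matrix.trace (P * Pᵀ) = P 0 0^2 + P 0 1^2 + P 1 0^2 + P 1 1^2 := by
      simp [Matrix.trace, Matrix.diag, Matrix.mul_apply, Matrix.transpose_apply,
        Fin.sum_univ_two] <;> ring
    rw [← h, htrPP]
  have hfrobP : frob P = Real.sqrt (l1^2 + l2^2) := by rw [frob_exp, hfrob2]
  have hPeta : P = !![P 0 0, P 0 1; P 0 1, P 1 1] := by
    conv_lhs => rw [Matrix.eta_fin_two P]
    rw [hb]
  have hdet' : P 0 0 * P 1 1 - P 0 1 * P 0 1 = l1 * l2 := by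
    rw [← hdetP, Matrix.det_fin_two, hb]
  have hd : (0:ℝ) < l1 * l2 := mul_pos (lt_of_lt_of_le hl2 hl12) hl2
  have hdA : l1 * l2 ≤ (diaA P κ κ).det := by
    conv_rhs => rw [hPeta]
    exact det_diaA_ge (P 0 0) (P 0 1) (P 1 1) l1 l2 hdet' κ hκ
  have hdB : l1 * l2 ≤ (diaA P κ' κ').det := by
    conv_rhs => rw [hPeta]
    exact det_diaA_ge (P 0 0) (P 0 1) (P 1 1) l1 l2 hdet' κ' hκ'
  have hdA0 : 0 < (diaA P κ κ).det := lt_of_lt_of_le hd hdA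
  have hdB0 : 0 < (diaA P κ' κ').det := lt_of_lt_of_le hd hdB
  -- frobenius bounds
  have hfA : frob (diaA P κ κ) ≤ Real.sqrt (l1^2+l2^2) := by
    have h := frob_diaA_le P κ κ
    rw [hκ, hfrobP] at h
    simpa using h
  have hfB : frob (diaA P κ' κ') ≤ Real.sqrt (l1^2+l2^2) := by
    have h := frob_diaA_le P κ' κ'
    rw [hκ', hfrobP] at h
    simpa using h
  have hfE : frob (diaA P κ κ - diaA P κ' κ')
      ≤ 2 * Real.sqrt (l1^2+l2^2) * ‖κ - κ'‖ := by
    rw [diaA_sub_decomp]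
    have h1 := frob_diaA_le P (κ - κ') κ
    have h2 := frob_diaA_le P κ' (κ - κ')
    rw [hκ, hfrobP] at h1
    rw [hκ', hfrobP] at h2
    refine (frob_add_le _ _).trans ?_
    calc frob (diaA P (κ - κ') κ) + frob (diaA P κ' (κ - κ'))
        ≤ Real.sqrt (l1^2+l2^2) * (‖κ - κ'‖ * 1) + Real.sqrt (l1^2+l2^2) * (1 * ‖κ - κ'‖) :=
          add_le_add h1 h2
      _ = 2 * Real.sqrt (l1^2+l2^2) * ‖κ - κ'‖ := by ring
  have hdd : |(diaA P κ κ).det - (diaA P κ' κ').det|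
      ≤ 2 * (Real.sqrt (l1^2+l2^2) * Real.sqrt (l1^2+l2^2)) * ‖κ - κ'‖ := by
    refine (det_diff_le _ _).trans ?_
    calc (frob (diaA P κ κ) + frob (diaA P κ' κ')) / 2 * frob (diaA P κ κ - diaA P κ' κ')
        ≤ Real.sqrt (l1^2+l2^2) * (2 * Real.sqrt (l1^2+l2^2) * ‖κ - κ'‖) :=
          mul_le_mul (by linarith) hfE (frob_nonneg _) hS0
      _ = 2 * (Real.sqrt (l1^2+l2^2) * Real.sqrt (l1^2+l2^2)) * ‖κ - κ'‖ := by ring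
  -- inverse split
  have hAinv : (diaA P κ κ)⁻¹ = ((diaA P κ κ).det)⁻¹ • (diaA P κ κ).adjugate := by
    rw [Matrix.inv_def, Ring.inverse_eq_inv]
  have hBinv : (diaA P κ' κ')⁻¹ = ((diaA P κ' κ').det)⁻¹ • (diaA P κ' κ').adjugate := by
    rw [Matrix.inv_def, Ring.inverse_eq_inv]
  have hsplit : (diaA P κ κ)⁻¹ - (diaA P κ' κ')⁻¹
      = ((diaA P κ κ).det)⁻¹ • ((diaA P κ κ).adjugate - (diaA P κ' κ').adjugate)
        + (((diaA P κ κ).det)⁻¹ - ((diaA P κ' κ').det)⁻¹) • (diaA P κ' κ').adjugate := by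
    rw [hAinv, hBinv, smul_sub, sub_smul]
    abel
  have step : frob ((diaA P κ κ)⁻¹ - (diaA P κ' κ')⁻¹)
      ≤ |((diaA P κ κ).det)⁻¹| * frob (diaA P κ κ - diaA P κ' κ')
        + |((diaA P κ κ).det)⁻¹ - ((diaA P κ' κ').det)⁻¹| * frob (diaA P κ' κ') := by
    rw [hsplit]
    refine (frob_add_le _ _).trans ?_
    rw [frob_smul, frob_smul, frob_adj_sub, frob_adjugate]
  have hiA : |((diaA P κ κ).det)⁻¹| ≤ (l1*l2)⁻¹ := by
    rw [abs_of_pos (inv_pos.mpr hdA0)]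
    exact inv_anti₀ hd hdA
  have hiAB : |((diaA P κ κ).det)⁻¹ - ((diaA P κ' κ').det)⁻¹|
      ≤ 2 * (Real.sqrt (l1^2+l2^2) * Real.sqrt (l1^2+l2^2)) * ‖κ - κ'‖ / ((l1*l2) * (l1*l2)) := by
    have hA0' : (diaA P κ κ).det ≠ 0 := ne_of_gt hdA0
    have hB0' : (diaA P κ' κ').det ≠ 0 := ne_of_gt hdB0
    have heq : ((diaA P κ κ).det)⁻¹ - ((diaA P κ' κ').det)⁻¹
        = ((diaA P κ' κ').det - (diaA P κ κ).det)
          / ((diaA P κ κ).det * (diaA P κ' κ').det) := by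
      field_simp
    rw [heq, abs_div, abs_of_pos (mul_pos hdA0 hdB0), abs_sub_comm]
    exact div_le_div₀ (by positivity) hdd (mul_pos hd hd)
      (mul_le_mul hdA hdB (le_of_lt hd) (le_of_lt hdA0))
  have final1 : frob ((diaA P κ κ)⁻¹ - (diaA P κ' κ')⁻¹)
      ≤ (l1*l2)⁻¹ * (2 * Real.sqrt (l1^2+l2^2) * ‖κ - κ'‖)
        + (2 * (Real.sqrt (l1^2+l2^2) * Real.sqrt (l1^2+l2^2)) * ‖κ - κ'‖ / ((l1*l2) * (l1*l2)))
          * Real.sqrt (l1^2+l2^2) := by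
    refine step.trans (add_le_add ?_ ?_)
    · exact mul_le_mul hiA hfE (frob_nonneg _) (le_of_lt (inv_pos.mpr hd))
    · refine mul_le_mul hiAB hfB (frob_nonneg _) ?_
      exact div_nonneg (by positivity) (le_of_lt (mul_pos hd hd))
  refine final1.trans ?_
  have hSS : Real.sqrt (l1^2+l2^2) * Real.sqrt (l1^2+l2^2) = l1^2+l2^2 :=
    Real.mul_self_sqrt hT0
  have h1 : (l1*l2)⁻¹ * (2 * Real.sqrt (l1^2+l2^2) * ‖κ - κ'‖)
      ≤ 4 * Real.sqrt N * Real.sqrt (l1 ^ 2 + l2 ^ 2) / (l1 * l2) * ‖κ - κ'‖ := by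
    rw [inv_mul_eq_div, div_mul_eq_mul_div]
    refine (div_le_div_iff_of_pos_right hd).mpr ?_
    nlinarith [mul_nonneg hS0 he0, mul_nonneg (mul_nonneg hS0 he0) (sub_nonneg.mpr hN1)]
  have h2 : (2 * (Real.sqrt (l1^2+l2^2) * Real.sqrt (l1^2+l2^2)) * ‖κ - κ'‖
        / ((l1*l2) * (l1*l2))) * Real.sqrt (l1^2+l2^2)
      ≤ 16 * Real.sqrt N * ((l1 ^ 2 + l2 ^ 2) * Real.sqrt (l1 ^ 2 + l2 ^ 2)) / (l1 * l2) ^ 2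
        * ‖κ - κ'‖ := by
    rw [hSS, pow_two (l1*l2), div_mul_eq_mul_div, div_mul_eq_mul_div]
    refine (div_le_div_iff_of_pos_right (mul_pos hd hd)).mpr ?_
    have k1 : 0 ≤ (l1^2+l2^2) * Real.sqrt (l1^2+l2^2) * ‖κ - κ'‖ :=
      mul_nonneg (mul_nonneg hT0 hS0) he0
    have k2 : 0 ≤ (l1^2+l2^2) * Real.sqrt (l1^2+l2^2) * ‖κ - κ'‖ * (Real.sqrt N - 1) :=
      mul_nonneg k1 (by linarith)
    nlinarith [k1, k2]
  calc _ ≤ 4 * Real.sqrt N * Real.sqrt (l1 ^ 2 + l2 ^ 2) / (l1 * l2) * ‖κ - κ'‖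
        + 16 * Real.sqrt N * ((l1 ^ 2 + l2 ^ 2) * Real.sqrt (l1 ^ 2 + l2 ^ 2)) / (l1 * l2) ^ 2
          * ‖κ - κ'‖ := add_le_add h1 h2
    _ = _ := by ring
end
end
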